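/- arXiv:1901.02152 — 5 statements merged into one kernel-verified Lean document; each statement's English description precedes it below -/
import Mathlib

section
/- Under the parallel trend assumption, the counterfactual mean θ₀ = E[Y_{t+1}(0) | G=1] satisfies θ₀ = E[Y_t | G=1] + E_X{ E[Y_{t+1} − Y_t | X, G=0] | G=1 }, i.e., it is identified from the distribution of observed data. -/
open MeasureTheory ProbabilityTheory

lemma stmt_0_aux {Ω : Type*} (mX : MeasurableSpace Ω) {m0 : MeasurableSpace Ω}
    (hm : mX ≤ m0)
    (μ : Measure Ω) [IsProbabilityMeasure μ]
    (G Yt0 Yt10 : Ω → ℝ) (hGmeas : Measurable G) (hG : ∀ ω, G ω = 0 ∨ G ω = 1)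
    (hG1 : μ {ω | G ω = 1} ≠ 0) (hG0 : μ {ω | G ω = 0} ≠ 0)
    (hYt0 : Integrable Yt0 μ) (hYt10 : Integrable Yt10 μ)
    (hover : ∀ᵐ ω ∂μ, (MeasureTheory.condExp mX μ G) ω < 1)
    (hPT : MeasureTheory.condExp mX (μ[|{ω | G ω = 1}]) (fun ω => Yt10 ω - Yt0 ω)
      =ᵐ[μ] MeasureTheory.condExp mX (μ[|{ω | G ω = 0}]) (fun ω => Yt10 ω - Yt0 ω))
    (Yt1 : Ω → ℝ) (hobs : ∀ ω, G ω = 0 → Yt1 ω = Yt10 ω) :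
    ∫ ω, Yt10 ω ∂(μ[|{ω | G ω = 1}])
      = ∫ ω, Yt0 ω ∂(μ[|{ω | G ω = 1}])
        + ∫ ω, (MeasureTheory.condExp mX (μ[|{ω | G ω = 0}])
            (fun ω => Yt1 ω - Yt0 ω)) ω ∂(μ[|{ω | G ω = 1}]) := by
  set s1 : Set Ω := {ω | G ω = 1} with hs1
  set s0 : Set Ω := {ω | G ω = 0} with hs0
  have hms1 : MeasurableSet s1 := hGmeas (measurableSet_singleton 1)
  have hms0 : MeasurableSet s0 := hGmeas (measurableSet_singleton 0)
  have hP1 : IsProbabilityMeasure (μ[|s1]) := cond_isProbabilityMeasure hG1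
  have hP0 : IsProbabilityMeasure (μ[|s0]) := cond_isProbabilityMeasure hG0
  -- integrability transfers to conditional measures
  have hcond_int : ∀ (f : Ω → ℝ) (s : Set Ω), μ s ≠ 0 → Integrable f μ →
      Integrable f (μ[|s]) := by
    intro f s hs hf
    rw [ProbabilityTheory.cond]
    exact (hf.restrict).smul_measure (by simp [hs])
  have hGint : Integrable G μ :=
    (integrable_const (1:ℝ)).mono' (hGmeas.aestronglyMeasurable (μ := μ))
      (Filter.Eventually.of_forall fun ω => by rcases hG ω with h | h <;> simp [h])
  -- key: an mX-measurable set that is null on the control group is null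
  have key : ∀ N : Set Ω, MeasurableSet[mX] N → μ (N ∩ s0) = 0 → μ N = 0 := by
    intro N hN h0
    have hNm : MeasurableSet N := hm N hN
    have h1 : ∫ x in N, (1 - G x) ∂μ = 0 := by
      have hind : ∀ x, (1 : ℝ) - G x = s0.indicator (fun _ => (1:ℝ)) x := by
        intro x
        rcases hG x with h | h
        · simp [Set.indicator, hs0, h]
        · have : x ∉ s0 := by simp [hs0, h]
          simp [Set.indicator_of_notMem this, h]
      simp_rw [hind]
      rw [setIntegral_indicator hms0, setIntegral_const]
      simp [Measure.real, h0]
    have h2 : ∫ x in N, (1 - (μ[G|mX]) x) ∂μ = 0 := by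
      rw [integral_sub (integrable_const 1).integrableOn integrable_condExp.integrableOn,
        setIntegral_condExp hm hGint hN]
      rw [integral_sub (integrable_const 1).integrableOn hGint.integrableOn] at h1
      linarith
    have h3 : 0 ≤ᵐ[μ.restrict N] fun x => 1 - (μ[G|mX]) x :=
      ae_restrict_of_ae (hover.mono fun ω h => by dsimp; linarith)
    by_contra hne
    have hae : ∀ᵐ x ∂μ, x ∈ Function.support fun x => 1 - (μ[G|mX]) x :=
      hover.mono fun ω h => by
        simp only [Function.mem_support]
        intro hc; rw [sub_eq_zero] at hc; exact absurd hc.symm (ne_of_lt h)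
    have hcompl : μ (Function.support fun x => 1 - (μ[G|mX]) x)ᶜ = 0 := by
      simpa [Set.compl_def] using ae_iff.1 hae
    have hsupp : μ ((Function.support fun x => 1 - (μ[G|mX]) x) ∩ N) = μ N := by
      refine le_antisymm (measure_mono Set.inter_subset_right) ?_
      calc μ N ≤ μ (((Function.support fun x => 1 - (μ[G|mX]) x) ∩ N)
            ∪ (Function.support fun x => 1 - (μ[G|mX]) x)ᶜ) := by
              refine measure_mono fun x hx => ?_
              by_cases hxs : x ∈ Function.support fun x => 1 - (μ[G|mX]) x
              · exact Or.inl ⟨hxs, hx⟩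
              · exact Or.inr hxs
        _ ≤ μ ((Function.support fun x => 1 - (μ[G|mX]) x) ∩ N)
            + μ (Function.support fun x => 1 - (μ[G|mX]) x)ᶜ := measure_union_le _ _
        _ = μ ((Function.support fun x => 1 - (μ[G|mX]) x) ∩ N) := by rw [hcompl, add_zero]
    have hpos : 0 < ∫ x in N, (1 - (μ[G|mX]) x) ∂μ := by
      refine (setIntegral_pos_iff_support_of_nonneg_ae h3 ?_).2 ?_
      · exact ((integrable_const 1).sub integrable_condExp).integrableOn
      · rw [hsupp]; exact lt_of_le_of_ne zero_le (Ne.symm hne)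
    rw [h2] at hpos; exact lt_irrefl 0 hpos
  -- on the control group, the observed trend equals the untreated trend
  have hG0ae : ∀ᵐ ω ∂(μ[|s0]), G ω = 0 := by
    rw [ProbabilityTheory.cond]
    exact Measure.ae_smul_measure (ae_restrict_mem hms0) _
  have hobs0 : (fun ω => Yt1 ω - Yt0 ω) =ᵐ[μ[|s0]] (fun ω => Yt10 ω - Yt0 ω) :=
    hG0ae.mono fun ω h => by simp [hobs ω h]
  have hcongr : (MeasureTheory.condExp mX (μ[|s0]) (fun ω => Yt1 ω - Yt0 ω))
      =ᵐ[μ[|s0]] (MeasureTheory.condExp mX (μ[|s0]) (fun ω => Yt10 ω - Yt0 ω)) :=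
    condExp_congr_ae hobs0
  set f := MeasureTheory.condExp mX (μ[|s0]) (fun ω => Yt1 ω - Yt0 ω) with hf
  set g0 := MeasureTheory.condExp mX (μ[|s0]) (fun ω => Yt10 ω - Yt0 ω) with hg0
  set g1 := MeasureTheory.condExp mX (μ[|s1]) (fun ω => Yt10 ω - Yt0 ω) with hg1
  have hNmeas : MeasurableSet[mX] {ω | f ω = g0 ω} :=
    measurableSet_eq_fun (stronglyMeasurable_condExp (m := mX)).measurable
      (stronglyMeasurable_condExp (m := mX)).measurable
  have hN0 : (μ[|s0]) {ω | f ω = g0 ω}ᶜ = 0 := by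
    simpa [Set.compl_setOf] using ae_iff.1 hcongr
  have hNs0 : μ ({ω | f ω = g0 ω}ᶜ ∩ s0) = 0 := by
    rw [ProbabilityTheory.cond, Measure.smul_apply, smul_eq_mul,
      Measure.restrict_apply (hm _ hNmeas.compl)] at hN0
    have hinv : (μ s0)⁻¹ ≠ 0 := by simp [measure_ne_top μ s0]
    exact (mul_eq_zero.1 hN0).resolve_left hinv
  have hNnull : μ {ω | f ω = g0 ω}ᶜ = 0 := key _ hNmeas.compl hNs0
  have hfg0 : f =ᵐ[μ] g0 :=
    ae_iff.2 (by simpa [Set.compl_setOf] using hNnull)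
  have hfg1 : f =ᵐ[μ[|s1]] g1 := by
    have h : f =ᵐ[μ] g1 := hfg0.trans hPT.symm
    exact h.filter_mono (cond_absolutelyContinuous.ae_le)
  have hint10' : Integrable Yt10 (μ[|s1]) := hcond_int _ _ hG1 hYt10
  have hint0' : Integrable Yt0 (μ[|s1]) := hcond_int _ _ hG1 hYt0
  haveI : SigmaFinite ((μ[|s1]).trim hm) := by infer_instance
  have hfin : ∫ ω, f ω ∂(μ[|s1])
      = ∫ ω, Yt10 ω ∂(μ[|s1]) - ∫ ω, Yt0 ω ∂(μ[|s1]) := by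
    rw [integral_congr_ae hfg1, hg1, integral_condExp hm, integral_sub hint10' hint0']
  rw [hfin]; ring


/-- Identification of the counterfactual mean under parallel trend.
With `Y_t = Y_t(0)` and `Y_{t+1} = (1−G)Y_{t+1}(0) + G·Y_{t+1}(1)` observed, if
`E[Y_{t+1}(0) − Y_t(0) | X, G=1] = E[Y_{t+1}(0) − Y_t(0) | X, G=0]` a.s. (parallel
trend) and overlap holds, then
`θ₀ = E[Y_{t+1}(0)|G=1] = E[Y_t|G=1] + E_X{ E[Y_{t+1} − Y_t | X, G=0] | G=1 }`. -/
theorem stmt_0 {Ω : Type*} (mX : MeasurableSpace Ω) [MeasurableSpace Ω] (μ : Measure Ω) [IsProbabilityMeasure μ]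
    (X : Ω → ℝ) (hX : Measurable X)
    (hmX : mX = MeasurableSpace.comap X inferInstance)
    (G Yt0 Yt10 Yt11 : Ω → ℝ) (hGmeas : Measurable G) (hG : ∀ ω, G ω = 0 ∨ G ω = 1)
    (hG1 : μ {ω | G ω = 1} ≠ 0) (hG0 : μ {ω | G ω = 0} ≠ 0)
    (hYt0 : Integrable Yt0 μ) (hYt10 : Integrable Yt10 μ) (hYt11 : Integrable Yt11 μ)
    (hover : ∀ᵐ ω ∂μ, (MeasureTheory.condExp mX μ G) ω < 1)
    -- parallel trend: the two conditional (on X, within group) mean trends agree a.s.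
    (hPT : MeasureTheory.condExp mX (μ[|{ω | G ω = 1}]) (fun ω => Yt10 ω - Yt0 ω)
      =ᵐ[μ] MeasureTheory.condExp mX (μ[|{ω | G ω = 0}]) (fun ω => Yt10 ω - Yt0 ω))
    -- the observed after-period outcome
    (Yt1 : Ω → ℝ) (hobs : ∀ ω, Yt1 ω = (1 - G ω) * Yt10 ω + G ω * Yt11 ω)
    (hint : Integrable
      (MeasureTheory.condExp mX (μ[|{ω | G ω = 0}]) (fun ω => Yt1 ω - Yt0 ω))
      (μ[|{ω | G ω = 1}])) :
    ∫ ω, Yt10 ω ∂(μ[|{ω | G ω = 1}])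
      = ∫ ω, Yt0 ω ∂(μ[|{ω | G ω = 1}])
        + ∫ ω, (MeasureTheory.condExp mX (μ[|{ω | G ω = 0}])
            (fun ω => Yt1 ω - Yt0 ω)) ω ∂(μ[|{ω | G ω = 1}]) := by
  refine stmt_0_aux mX (hmX.trans_le hX.comap_le) μ G Yt0 Yt10
    hGmeas hG hG1 hG0 hYt0 hYt10 hover hPT Yt1 ?_
  intro ω h
  rw [hobs ω, h]
  ring
end

section
/- Under the parallel trend and weak overlap assumptions, θ₀ = E[Y_{t+1}(0) | G=1] = (1/π) E[ G·Y_t + (1−G)(Y_{t+1} − Y_t)·e(X)/(1 − e(X)) ], where π = P(G=1) and e(X) = P(G=1|X). -/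
open MeasureTheory ProbabilityTheory

abbrev msOf {Ω : Type*} {m : MeasurableSpace Ω} (_ : @MeasureTheory.Measure Ω m) :
    MeasurableSpace Ω := m

theorem stmt_1_aux {Ω : Type*} (mX : MeasurableSpace Ω) [m0 : MeasurableSpace Ω]
    (μ : Measure Ω) [IsProbabilityMeasure μ] (hm : mX ≤ m0)
    (G Yt0 Yt10 Yt11 : Ω → ℝ) (hGmeas : Measurable G) (hG : ∀ ω, G ω = 0 ∨ G ω = 1)
    (hG1 : μ {ω | G ω = 1} ≠ 0) (hG0 : μ {ω | G ω = 0} ≠ 0)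
    (hYt0 : Integrable Yt0 μ) (hYt10 : Integrable Yt10 μ) (hYt11 : Integrable Yt11 μ)
    (e : Ω → ℝ) (he : e =ᵐ[μ] MeasureTheory.condExp mX μ G)
    (δ : ℝ) (hδ : 0 < δ) (he0 : ∀ᵐ ω ∂μ, 0 ≤ e ω) (heδ : ∀ᵐ ω ∂μ, e ω ≤ 1 - δ)
    (hPT : MeasureTheory.condExp mX (μ[|{ω | G ω = 1}]) (fun ω => Yt10 ω - Yt0 ω)
      =ᵐ[μ] MeasureTheory.condExp mX (μ[|{ω | G ω = 0}]) (fun ω => Yt10 ω - Yt0 ω))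
    (Yt1 : Ω → ℝ) (hobs : ∀ ω, Yt1 ω = (1 - G ω) * Yt10 ω + G ω * Yt11 ω)
    (hint : Integrable
      (fun ω => G ω * Yt0 ω + (1 - G ω) * (Yt1 ω - Yt0 ω) * e ω / (1 - e ω)) μ) :
    ∫ ω, Yt10 ω ∂(μ[|{ω | G ω = 1}])
      = (1 / (μ {ω | G ω = 1}).toReal)
        * ∫ ω, G ω * Yt0 ω + (1 - G ω) * (Yt1 ω - Yt0 ω) * e ω / (1 - e ω) ∂μ := by
  classical
  set A : Set Ω := {ω | G ω = 1} with hAdef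
  set B : Set Ω := {ω | G ω = 0} with hBdef
  have hA : MeasurableSet A := hGmeas (measurableSet_singleton 1)
  have hB : MeasurableSet B := hGmeas (measurableSet_singleton 0)
  haveI : SigmaFinite (μ.trim hm) := inferInstance
  haveI hP1 : IsProbabilityMeasure (μ[|A]) := cond_isProbabilityMeasure hG1
  haveI hP0 : IsProbabilityMeasure (μ[|B]) := cond_isProbabilityMeasure hG0
  haveI : SigmaFinite ((μ[|A]).trim hm) := inferInstance
  haveI : SigmaFinite ((μ[|B]).trim hm) := inferInstance
  set D : Ω → ℝ := fun ω => Yt10 ω - Yt0 ω with hDdef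
  have hD : Integrable D μ := hYt10.sub hYt0
  set eb : Ω → ℝ := MeasureTheory.condExp mX μ G with hebdef
  set w : Ω → ℝ := fun ω => eb ω / (1 - eb ω) with hwdef
  have hw_sm : StronglyMeasurable[mX] w :=
    ((stronglyMeasurable_condExp.measurable.div
      (measurable_const.sub stronglyMeasurable_condExp.measurable))).stronglyMeasurable
  have hGint : Integrable G μ := by
    refine (integrable_const (1 : ℝ)).mono' hGmeas.aestronglyMeasurable ?_
    refine ae_of_all _ fun ω => ?_
    rcases hG ω with h | h <;> simp [h]
  have hebδ : ∀ᵐ ω ∂μ, eb ω ≤ 1 - δ := by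
    filter_upwards [he, heδ] with ω h1 h2
    rw [← h1]; exact h2
  -- cond measure integral formula
  have hcondInt : ∀ (s : Set Ω) (f : Ω → ℝ),
      ∫ ω, f ω ∂(μ[|s]) = ((μ s).toReal)⁻¹ * ∫ ω in s, f ω ∂μ := by
    intro s f
    show ∫ ω, f ω ∂((μ s)⁻¹ • μ.restrict s) = _
    rw [integral_smul_measure, ENNReal.toReal_inv, smul_eq_mul]
  -- transfer integrability μ ↔ cond
  have hIntCond : ∀ (s : Set Ω) (f : Ω → ℝ), μ s ≠ 0 →
      (Integrable f (μ[|s]) ↔ IntegrableOn f s μ) := by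
    intro s f hs
    constructor
    · intro hf
      have h2 : Integrable f ((μ s) • ((μ s)⁻¹ • μ.restrict s)) :=
        Integrable.smul_measure hf (measure_ne_top μ s)
      have h3 : (μ s) • ((μ s)⁻¹ • μ.restrict s) = μ.restrict s := by
        rw [smul_smul, ENNReal.mul_inv_cancel hs (measure_ne_top μ s), one_smul]
      rw [h3] at h2
      exact h2
    · intro hf
      exact Integrable.smul_measure hf (ENNReal.inv_ne_top.2 hs)
  -- G-indicator identities
  have hGindA : ∀ f : Ω → ℝ, (fun ω => G ω * f ω) = fun ω => A.indicator f ω := by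
    intro f; funext ω
    rcases hG ω with h | h
    · have hω : ω ∉ A := by simp [hAdef, h]
      simp [h, Set.indicator_of_notMem hω]
    · have hω : ω ∈ A := by simp [hAdef, h]
      simp [h, Set.indicator_of_mem hω]
  have hGindB : ∀ f : Ω → ℝ, (fun ω => (1 - G ω) * f ω) = fun ω => B.indicator f ω := by
    intro f; funext ω
    rcases hG ω with h | h
    · have hω : ω ∈ B := by simp [hBdef, h]
      simp [h, Set.indicator_of_mem hω]
    · have hω : ω ∉ B := by simp [hBdef, h]
      simp [h, Set.indicator_of_notMem hω]
  set R : Ω → ℝ := fun ω => (1 - G ω) * (Yt1 ω - Yt0 ω) * e ω / (1 - e ω) with hRdef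
  have hRD : R = fun ω => B.indicator (fun ω => D ω * e ω / (1 - e ω)) ω := by
    funext ω
    rcases hG ω with h | h
    · have hmem : ω ∈ B := by simp [hBdef, h]
      have h10 : Yt1 ω = Yt10 ω := by rw [hobs ω, h]; ring
      simp [hRdef, Set.indicator_of_mem hmem, h, h10, hDdef]
    · have hmem : ω ∉ B := by simp [hBdef, h]
      simp [hRdef, Set.indicator_of_notMem hmem, h]
  have hGY0 : Integrable (fun ω => G ω * Yt0 ω) μ := by
    refine hYt0.bdd_mul hGmeas.aestronglyMeasurable (c := 1) (ae_of_all _ fun ω => ?_)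
    rcases hG ω with h | h <;> simp [h]
  have hRint : Integrable R μ := by
    have h2 := hint.sub hGY0
    refine h2.congr ?_
    refine ae_of_all _ fun ω => ?_
    simp only [Pi.sub_apply, hRdef]; ring
  set h1 : Ω → ℝ := MeasureTheory.condExp mX (μ[|A]) D with hh1def
  set h0 : Ω → ℝ := MeasureTheory.condExp mX (μ[|B]) D with hh0def
  have hD1 : Integrable D (μ[|A]) := (hIntCond A D hG1).2 hD.integrableOn
  have hD0 : Integrable D (μ[|B]) := (hIntCond B D hG0).2 hD.integrableOn
  have hh1int : Integrable h1 (μ[|A]) := integrable_condExp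
  have hh1on : IntegrableOn h1 A μ := (hIntCond A h1 hG1).1 hh1int
  have hGh1 : Integrable (fun ω => h1 ω * G ω) μ := by
    have hfun : (fun ω => h1 ω * G ω) = fun ω => A.indicator h1 ω := by
      funext ω
      have h2 := congrFun (hGindA h1) ω
      simpa [mul_comm] using h2
    rw [hfun]
    exact (integrable_indicator_iff hA).2 hh1on
  have c1ne : ((μ A).toReal : ℝ) ≠ 0 := ENNReal.toReal_ne_zero.2 ⟨hG1, measure_ne_top μ A⟩
  have c0ne : ((μ B).toReal : ℝ) ≠ 0 := ENNReal.toReal_ne_zero.2 ⟨hG0, measure_ne_top μ B⟩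
  -- left chain
  have left_chain : ∫ ω, G ω * D ω ∂μ = ∫ ω, h1 ω * eb ω ∂μ := by
    have e1 : ∫ ω, G ω * D ω ∂μ = ∫ ω in A, D ω ∂μ := by
      rw [hGindA D, integral_indicator hA]
    have e2 : ∫ ω in A, D ω ∂μ = (μ A).toReal * ∫ ω, D ω ∂(μ[|A]) := by
      rw [hcondInt A D, ← mul_assoc, mul_inv_cancel₀ c1ne, one_mul]
    have e3 : ∫ ω, D ω ∂(μ[|A]) = ∫ ω, h1 ω ∂(μ[|A]) := (integral_condExp hm).symm
    have e4 : (μ A).toReal * ∫ ω, h1 ω ∂(μ[|A]) = ∫ ω in A, h1 ω ∂μ := by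
      rw [hcondInt A h1, ← mul_assoc, mul_inv_cancel₀ c1ne, one_mul]
    have e5 : ∫ ω in A, h1 ω ∂μ = ∫ ω, h1 ω * G ω ∂μ := by
      rw [← integral_indicator hA]
      congr 1
      funext ω
      have h2 := congrFun (hGindA h1) ω
      simpa [mul_comm] using h2.symm
    have e6 : ∫ ω, h1 ω * G ω ∂μ = ∫ ω, h1 ω * eb ω ∂μ := by
      rw [← integral_condExp hm]
      exact integral_congr_ae (condExp_mul_of_stronglyMeasurable_left
        (stronglyMeasurable_condExp : StronglyMeasurable[mX] h1) hGh1 hGint)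
    rw [e1, e2, e3, e4, e5, e6]
  -- right chain
  have hae_we : ∀ᵐ ω ∂μ, D ω * e ω / (1 - e ω) = w ω * D ω := by
    filter_upwards [he] with ω hω
    simp only [hwdef, ← hebdef, ← hω]; ring
  have hwD0 : Integrable (fun ω => w ω * D ω) (μ[|B]) := by
    have hOn : IntegrableOn (fun ω => D ω * e ω / (1 - e ω)) B μ := by
      have h2 : Integrable (fun ω => B.indicator (fun ω => D ω * e ω / (1 - e ω)) ω) μ := by
        rw [← hRD]; exact hRint
      exact (integrable_indicator_iff hB).1 h2
    refine ((hIntCond B _ hG0).2 hOn).congr ?_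
    exact (cond_absolutelyContinuous (s := B)).ae_le hae_we
  have hwh0int : Integrable (fun ω => w ω * h0 ω) (μ[|B]) :=
    integrable_condExp.congr (condExp_mul_of_stronglyMeasurable_left hw_sm hwD0 hD0)
  have hwh1_ae0 : (fun ω => w ω * h1 ω) =ᵐ[μ[|B]] fun ω => w ω * h0 ω := by
    have h2 : h1 =ᵐ[μ[|B]] h0 := (cond_absolutelyContinuous (s := B)).ae_le hPT
    filter_upwards [h2] with ω hω
    rw [hω]
  have hwh1int0 : Integrable (fun ω => w ω * h1 ω) (μ[|B]) := hwh0int.congr hwh1_ae0.symm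
  have hwh1on : IntegrableOn (fun ω => w ω * h1 ω) B μ := (hIntCond B _ hG0).1 hwh1int0
  have hwh1G : Integrable (fun ω => w ω * h1 ω * (1 - G ω)) μ := by
    have hfun : (fun ω => w ω * h1 ω * (1 - G ω))
        = fun ω => B.indicator (fun ω => w ω * h1 ω) ω := by
      funext ω
      have h2 := congrFun (hGindB (fun ω => w ω * h1 ω)) ω
      rw [← h2]; ring
    rw [hfun]
    exact (integrable_indicator_iff hB).2 hwh1on
  have h1G_int : Integrable (fun ω => 1 - G ω) μ := (integrable_const (1:ℝ)).sub hGint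
  have right_chain : ∫ ω, R ω ∂μ = ∫ ω, h1 ω * eb ω ∂μ := by
    have e1 : ∫ ω, R ω ∂μ = ∫ ω in B, D ω * e ω / (1 - e ω) ∂μ := by
      rw [hRD, integral_indicator hB]
    have e2 : ∫ ω in B, D ω * e ω / (1 - e ω) ∂μ
        = (μ B).toReal * ∫ ω, D ω * e ω / (1 - e ω) ∂(μ[|B]) := by
      rw [hcondInt B, ← mul_assoc, mul_inv_cancel₀ c0ne, one_mul]
    have e3 : ∫ ω, D ω * e ω / (1 - e ω) ∂(μ[|B]) = ∫ ω, w ω * D ω ∂(μ[|B]) :=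
      integral_congr_ae ((cond_absolutelyContinuous (s := B)).ae_le hae_we)
    have e4 : ∫ ω, w ω * D ω ∂(μ[|B]) = ∫ ω, w ω * h0 ω ∂(μ[|B]) := by
      rw [← integral_condExp hm]
      exact integral_congr_ae (condExp_mul_of_stronglyMeasurable_left hw_sm hwD0 hD0)
    have e5 : ∫ ω, w ω * h0 ω ∂(μ[|B]) = ∫ ω, w ω * h1 ω ∂(μ[|B]) :=
      integral_congr_ae hwh1_ae0.symm
    have e6 : (μ B).toReal * ∫ ω, w ω * h1 ω ∂(μ[|B]) = ∫ ω in B, w ω * h1 ω ∂μ := by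
      rw [hcondInt B, ← mul_assoc, mul_inv_cancel₀ c0ne, one_mul]
    have e7 : ∫ ω in B, w ω * h1 ω ∂μ = ∫ ω, w ω * h1 ω * (1 - G ω) ∂μ := by
      rw [← integral_indicator hB]
      congr 1
      funext ω
      have h2 := congrFun (hGindB (fun ω => w ω * h1 ω)) ω
      rw [← h2]; ring
    have e8 : ∫ ω, w ω * h1 ω * (1 - G ω) ∂μ = ∫ ω, w ω * h1 ω * (1 - eb ω) ∂μ := by
      rw [← integral_condExp hm]
      have hf_sm : StronglyMeasurable[mX] (fun ω => w ω * h1 ω) :=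
        hw_sm.mul stronglyMeasurable_condExp
      have hmul : MeasureTheory.condExp mX μ (fun ω => w ω * h1 ω * (1 - G ω))
          =ᵐ[μ] fun ω => w ω * h1 ω * (MeasureTheory.condExp mX μ (fun ω => 1 - G ω)) ω :=
        condExp_mul_of_stronglyMeasurable_left hf_sm hwh1G h1G_int
      have hsub : MeasureTheory.condExp mX μ (fun ω => 1 - G ω)
          =ᵐ[μ] fun ω => 1 - eb ω := by
        have hs := condExp_sub (m := mX) (μ := μ) (integrable_const (1:ℝ)) hGint
        have hc : MeasureTheory.condExp mX μ (fun _ => (1:ℝ)) = fun _ => (1:ℝ) :=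
          condExp_const hm 1
        filter_upwards [hs] with ω hω
        have : ((fun _ => (1:ℝ)) - G) = fun ω => 1 - G ω := rfl
        rw [← this, hω, Pi.sub_apply, hc]
      refine integral_congr_ae ?_
      filter_upwards [hmul, hsub] with ω h1ω h2ω
      rw [h1ω, h2ω]
    have e9 : ∫ ω, w ω * h1 ω * (1 - eb ω) ∂μ = ∫ ω, h1 ω * eb ω ∂μ := by
      refine integral_congr_ae ?_
      filter_upwards [hebδ] with ω hω
      have hne : 1 - eb ω ≠ 0 := by
        have : δ ≤ 1 - eb ω := by linarith
        linarith
      simp only [hwdef]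
      field_simp
    rw [e1, e2, e3, e4, e5, e6, e7, e8, e9]
  -- assemble
  have hGD : Integrable (fun ω => G ω * D ω) μ := by
    refine hD.bdd_mul hGmeas.aestronglyMeasurable (c := 1) (ae_of_all _ fun ω => ?_)
    rcases hG ω with h | h <;> simp [h]
  have hsplit : ∫ ω, G ω * Yt0 ω + (1 - G ω) * (Yt1 ω - Yt0 ω) * e ω / (1 - e ω) ∂μ
      = ∫ ω, G ω * Yt0 ω ∂μ + ∫ ω, R ω ∂μ := by
    rw [← integral_add hGY0 hRint]
  have hGYt10 : ∫ ω, G ω * Yt0 ω ∂μ + ∫ ω, G ω * D ω ∂μ = ∫ ω, G ω * Yt10 ω ∂μ := by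
    rw [← integral_add hGY0 hGD]
    congr 1
    funext ω
    simp only [hDdef]; ring
  have hfinal : ∫ ω, Yt10 ω ∂(μ[|A]) = ((μ A).toReal)⁻¹ * ∫ ω, G ω * Yt10 ω ∂μ := by
    rw [hcondInt A Yt10]
    congr 1
    rw [hGindA Yt10, integral_indicator hA]
  rw [hfinal, hsplit, right_chain, ← left_chain, hGYt10, one_div]

/-- Weighting identification (Abadie, 2005). Under parallel trend and
weak overlap (`e(X) ≤ 1 − δ` a.s.),
`θ₀ = E[Y_{t+1}(0)|G=1] = (1/π)·E[G·Y_t + (1−G)(Y_{t+1}−Y_t)·e(X)/(1−e(X))]`,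
where `π = P(G=1)` and `e(X) = P(G=1|X)`. -/
theorem stmt_1 {Ω : Type*} (mX : MeasurableSpace Ω) [MeasurableSpace Ω] (μ : Measure Ω) [IsProbabilityMeasure μ]
    (X : Ω → ℝ) (hX : Measurable X)
    (hmX : mX = MeasurableSpace.comap X inferInstance)
    (G Yt0 Yt10 Yt11 : Ω → ℝ) (hGmeas : Measurable G) (hG : ∀ ω, G ω = 0 ∨ G ω = 1)
    (hG1 : μ {ω | G ω = 1} ≠ 0) (hG0 : μ {ω | G ω = 0} ≠ 0)
    (hYt0 : Integrable Yt0 μ) (hYt10 : Integrable Yt10 μ) (hYt11 : Integrable Yt11 μ)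
    -- the propensity score: a version of E[G | σ(X)], bounded away from 1
    (e : Ω → ℝ) (he : e =ᵐ[μ] MeasureTheory.condExp mX μ G)
    (δ : ℝ) (hδ : 0 < δ) (he0 : ∀ᵐ ω ∂μ, 0 ≤ e ω) (heδ : ∀ᵐ ω ∂μ, e ω ≤ 1 - δ)
    -- parallel trend
    (hPT : MeasureTheory.condExp mX (μ[|{ω | G ω = 1}]) (fun ω => Yt10 ω - Yt0 ω)
      =ᵐ[μ] MeasureTheory.condExp mX (μ[|{ω | G ω = 0}]) (fun ω => Yt10 ω - Yt0 ω))
    -- the observed after-period outcome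
    (Yt1 : Ω → ℝ) (hobs : ∀ ω, Yt1 ω = (1 - G ω) * Yt10 ω + G ω * Yt11 ω)
    (hint : Integrable
      (fun ω => G ω * Yt0 ω + (1 - G ω) * (Yt1 ω - Yt0 ω) * e ω / (1 - e ω)) μ) :
    ∫ ω, Yt10 ω ∂(μ[|{ω | G ω = 1}])
      = (1 / (μ {ω | G ω = 1}).toReal)
        * ∫ ω, G ω * Yt0 ω + (1 - G ω) * (Yt1 ω - Yt0 ω) * e ω / (1 - e ω) ∂μ := by
  have hm := hX.comap_le
  rw [← hmX] at hm
  exact @stmt_1_aux Ω mX (msOf μ) μ ‹_› hm G Yt0 Yt10 Yt11 hGmeas hG hG1 hG0 hYt0 hYt10 hYt11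
    e he δ hδ he0 heδ hPT Yt1 hobs hint
end

section
/- The double-robust estimator (equation form (9)) based on weighting plus augmentation is algebraically identical to the regression estimator plus a weighted residual correction (equation form (10)): for any finite sample, θ̂₀^wt + (Σᵢ Gᵢ)^{-1} Σᵢ (Gᵢ − êᵢ)(ν̂ᵢ − μ̂ᵢ)/(1 − êᵢ) = θ̂₀^reg + (Σᵢ Gᵢ)^{-1} Σᵢ (1−Gᵢ)(R̂_{i,t+1} − R̂_{it})·êᵢ/(1−êᵢ), where R̂_{i,t+1} = Y_{i,t+1} − ν̂ᵢ, R̂_{it} = Y_{it} − μ̂ᵢ. -/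
open Finset

/-!
Both sides share the term `Σ Gᵢ Y_{it}` and the normalisation `(Σ Gᵢ)⁻¹`, and the remaining sums
agree unit by unit: since `(Gᵢ − êᵢ)/(1 − êᵢ) = Gᵢ − (1 − Gᵢ) êᵢ/(1 − êᵢ)`, the augmentation term
splits into the regression term `Gᵢ (ν̂ᵢ − μ̂ᵢ)` minus the weighted correction that turns the
control units' outcome changes into residual changes.
-/

theorem sub_div_one_sub_eq {K : Type*} [Field K] {g e : K} (he : 1 - e ≠ 0) :
    (g - e) / (1 - e) = g - (1 - g) * e / (1 - e) := by
  field_simp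
  ring

theorem weighting_add_augmentation_eq {K : Type*} [Field K] {g e y y' v m : K}
    (he : 1 - e ≠ 0) :
    (1 - g) * (y' - y) * e / (1 - e) + (g - e) * (v - m) / (1 - e)
      = g * (v - m) + (1 - g) * ((y' - v) - (y - m)) * e / (1 - e) := by
  rw [mul_div_right_comm (g - e), sub_div_one_sub_eq he]
  ring

theorem sum_div_add_sum_div_congr {ι K : Type*} [Field K] (s : Finset ι) (a b c d : ι → K)
    (S T : K) (h : ∀ i ∈ s, a i + b i = c i + d i) :
    (S + ∑ i ∈ s, a i) / T + (∑ i ∈ s, b i) / T = (S + ∑ i ∈ s, c i) / T + (∑ i ∈ s, d i) / T := by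
  rw [← add_div, ← add_div, add_assoc, add_assoc, ← sum_add_distrib,
    ← sum_add_distrib, sum_congr rfl h]

theorem stmt_6_general (N : ℕ) (Yt Yt1 G e ν μ : Fin N → ℝ)
    (he : ∀ i, 0 ≤ e i ∧ e i < 1) :
    ((∑ i, G i * Yt i + ∑ i, (1 - G i) * (Yt1 i - Yt i) * e i / (1 - e i)) / (∑ i, G i)
        + (∑ i, (G i - e i) * (ν i - μ i) / (1 - e i)) / (∑ i, G i))
      = ((∑ i, G i * Yt i + ∑ i, G i * (ν i - μ i)) / (∑ i, G i)
        + (∑ i, (1 - G i) * ((Yt1 i - ν i) - (Yt i - μ i)) * e i / (1 - e i)) / (∑ i, G i)) :=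
  sum_div_add_sum_div_congr _ _ _ _ _ _ _ fun i _ =>
    weighting_add_augmentation_eq (sub_ne_zero.mpr (he i).2.ne')

/-- Algebraic equivalence of the two forms of the double-robust DID estimator:
weighting plus augmentation (form (9)) equals regression plus weighted residual
correction (form (10)), for any finite sample with `Gᵢ ∈ {0,1}`, `êᵢ ∈ [0,1)` and
`Σᵢ Gᵢ > 0`. -/
theorem stmt_6 (N : ℕ) (Yt Yt1 G e ν μ : Fin N → ℝ)
    (hG : ∀ i, G i = 0 ∨ G i = 1)
    (he : ∀ i, 0 ≤ e i ∧ e i < 1)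
    (hGpos : 0 < ∑ i, G i) :
    ((∑ i, G i * Yt i + ∑ i, (1 - G i) * (Yt1 i - Yt i) * e i / (1 - e i)) / (∑ i, G i)
        + (∑ i, (G i - e i) * (ν i - μ i) / (1 - e i)) / (∑ i, G i))
      = ((∑ i, G i * Yt i + ∑ i, G i * (ν i - μ i)) / (∑ i, G i)
        + (∑ i, (1 - G i) * ((Yt1 i - ν i) - (Yt i - μ i)) * e i / (1 - e i)) / (∑ i, G i)) :=
  stmt_6_general N Yt Yt1 G e ν μ he
end

section
/- Variance difference identity: with known propensity score e(X) = E[G|X], Var(φ^wt) − Var(φ^dr) = (2/π²)·E[ ((G−e(X))/(1−e(X)))² (Y_{t+1}−Y_t)(ν(X)−μ(X)) ] − (1/π²)·E[ ((G−e(X))/(1−e(X)))² (ν(X)−μ(X))² ]. -/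
open MeasureTheory ProbabilityTheory

lemma my_variance_congr {Ω : Type*} {mΩ : MeasurableSpace Ω} {μ : Measure Ω} {f g : Ω → ℝ}
    (h : f =ᵐ[μ] g) : variance f μ = variance g μ := by
  simp only [variance, evariance]
  rw [integral_congr_ae h]
  congr 1
  exact lintegral_congr_ae (h.mono fun x hx => by simp only []; rw [hx])

/-- Variance difference identity. With known propensity score
`e(X) = E[G|X]` (bounded by `1−δ`), square-integrable outcomes, bounded
`σ(X)`-measurable `ν, μ`, and `τ = E[(G−e(X))(Y_{t+1}−Y_t)/(π(1−e(X)))]`,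
`Var(φ^wt) − Var(φ^dr)
  = (2/π²)E[((G−e)/(1−e))²(Y_{t+1}−Y_t)(ν−μ)] − (1/π²)E[((G−e)/(1−e))²(ν−μ)²]`. -/
theorem stmt_11 {Ω : Type*} (mX : MeasurableSpace Ω) [MeasurableSpace Ω] (μ : Measure Ω) [IsProbabilityMeasure μ]
    (X : Ω → ℝ) (hX : Measurable X)
    (hmX : mX = MeasurableSpace.comap X inferInstance)
    (G : Ω → ℝ) (hGmeas : Measurable G) (hG : ∀ ω, G ω = 0 ∨ G ω = 1)
    (e : Ω → ℝ) (he : e =ᵐ[μ] MeasureTheory.condExp mX μ G)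
    (δ : ℝ) (hδ : 0 < δ) (he0 : ∀ᵐ ω ∂μ, 0 ≤ e ω) (heδ : ∀ᵐ ω ∂μ, e ω ≤ 1 - δ)
    (π : ℝ) (hπ : π = (μ {ω | G ω = 1}).toReal) (hπpos : 0 < π)
    (Yt Yt1 : Ω → ℝ) (hYt : MemLp Yt 2 μ) (hYt1 : MemLp Yt1 2 μ)
    (ν μf : Ω → ℝ) (hν : Measurable[mX] ν) (hμf : Measurable[mX] μf)
    (Cν : ℝ) (hνb : ∀ ω, |ν ω| ≤ Cν) (Cμ : ℝ) (hμb : ∀ ω, |μf ω| ≤ Cμ)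
    (τ : ℝ)
    (hτ : τ = ∫ ω, (G ω - e ω) * (Yt1 ω - Yt ω) / (π * (1 - e ω)) ∂μ) :
    variance (fun ω => (G ω - e ω) * (Yt1 ω - Yt ω) / (π * (1 - e ω)) - τ) μ
      - variance (fun ω =>
          (G ω - e ω) * (Yt1 ω - Yt ω - (ν ω - μf ω)) / (π * (1 - e ω)) - τ) μ
    = (2 / π ^ 2) * ∫ ω, ((G ω - e ω) / (1 - e ω)) ^ 2
          * (Yt1 ω - Yt ω) * (ν ω - μf ω) ∂μ
      - (1 / π ^ 2) * ∫ ω, ((G ω - e ω) / (1 - e ω)) ^ 2 * (ν ω - μf ω) ^ 2 ∂μ := by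
  have hm0 := hX.comap_le
  rw [← hmX] at hm0
  have hm := hm0
  haveI : SigmaFinite (μ.trim hm) := by infer_instance
  set e' := MeasureTheory.condExp mX μ G with he'def
  have he'sm : StronglyMeasurable[mX] e' := stronglyMeasurable_condExp
  have he'mX : Measurable[mX] e' := he'sm.measurable
  have hee' : e =ᵐ[μ] e' := he
  -- a.e. bounds on e'
  have hbd : ∀ᵐ ω ∂μ, 0 ≤ e' ω ∧ e' ω ≤ 1 - δ := by
    filter_upwards [he0, heδ, hee'] with ω h0 h1 h2
    rw [← h2]; exact ⟨h0, h1⟩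
  -- abbreviations
  set Δ : Ω → ℝ := fun ω => Yt1 ω - Yt ω with hΔdef
  set d : Ω → ℝ := fun ω => ν ω - μf ω with hddef
  set c' : Ω → ℝ := fun ω => (G ω - e' ω) / (π * (1 - e' ω)) with hc'def
  set W : Ω → ℝ := fun ω => c' ω * Δ ω with hWdef
  set Z : Ω → ℝ := fun ω => c' ω * d ω with hZdef
  have hΔ : MemLp Δ 2 μ := hYt1.sub hYt
  have hdmX : Measurable[mX] d := hν.sub hμf
  have hdb : ∀ ω, |d ω| ≤ Cν + Cμ := fun ω => (abs_sub (ν ω) (μf ω)).trans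
    (add_le_add (hνb ω) (hμb ω))
  have hc'mX : Measurable c' :=
    (hGmeas.sub (he'mX.mono hm le_rfl)).div
      (measurable_const.mul (measurable_const.sub (he'mX.mono hm le_rfl)))
  have hc'am :=
    (hc'mX.stronglyMeasurable).aestronglyMeasurable (μ := μ)
  have hdam :=
    ((hdmX.mono hm le_rfl).stronglyMeasurable).aestronglyMeasurable (μ := μ)
  -- bound on c'
  have hc'bd : ∀ᵐ ω ∂μ, |c' ω| ≤ 1 / (π * δ) := by
    filter_upwards [hbd] with ω ⟨h0, h1⟩
    have hδ1 : δ ≤ 1 - e' ω := by linarith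
    have hge : |G ω - e' ω| ≤ 1 := by
      rcases hG ω with h | h <;> rw [h, abs_le] <;> constructor <;> linarith
    have hpos : 0 < π * (1 - e' ω) := mul_pos hπpos (lt_of_lt_of_le hδ hδ1)
    rw [hc'def, abs_div, abs_of_pos hpos, div_le_div_iff₀ hpos (mul_pos hπpos hδ)]
    calc |G ω - e' ω| * (π * δ) ≤ 1 * (π * δ) := by
          exact mul_le_mul_of_nonneg_right hge (le_of_lt (mul_pos hπpos hδ))
      _ ≤ 1 * (π * (1 - e' ω)) := by
          rw [one_mul, one_mul]; exact mul_le_mul_of_nonneg_left hδ1 (le_of_lt hπpos)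
  -- MemLp facts
  have hWmem : MemLp W 2 μ := by
    refine MemLp.of_le_mul (c := 1 / (π * δ)) hΔ (hc'am.mul hΔ.1) ?_
    filter_upwards [hc'bd] with ω h
    simp only [hWdef, norm_mul, Real.norm_eq_abs]
    exact mul_le_mul_of_nonneg_right h (abs_nonneg _)
  have hK0 : (0:ℝ) ≤ 1 / (π * δ) := le_of_lt (by positivity)
  have hZbd : ∀ᵐ ω ∂μ, ‖Z ω‖ ≤ 1 / (π * δ) * (Cν + Cμ) := by
    filter_upwards [hc'bd] with ω h
    simp only [hZdef, norm_mul, Real.norm_eq_abs]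
    exact mul_le_mul h (hdb ω) (abs_nonneg _) hK0
  have hZ2 : MemLp Z 2 μ := MemLp.of_bound (hc'am.mul hdam) _ hZbd
  have hZint : Integrable Z μ := hZ2.integrable one_le_two
  have hWint : Integrable W μ := hWmem.integrable one_le_two
  have hZWint : Integrable (fun ω => Z ω * W ω) μ :=
    Integrable.bdd_mul hWint hZ2.aestronglyMeasurable hZbd
  have hZsq : Integrable (fun ω => Z ω ^ 2) μ := hZ2.integrable_sq
  -- τ = ∫ W
  have hWeq : (fun ω => (G ω - e ω) * (Yt1 ω - Yt ω) / (π * (1 - e ω))) =ᵐ[μ] W := by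
    filter_upwards [hee'] with ω h
    rw [h]
    simp only [hWdef, hc'def, hΔdef]
    ring
  have hτW : ∫ ω, W ω ∂μ = τ := by rw [hτ, integral_congr_ae hWeq]
  -- orthogonality : ∫ Z = 0
  set q : Ω → ℝ := fun ω => d ω / (π * (1 - e' ω)) with hqdef
  have hqmX : Measurable[mX] q :=
    hdmX.div (measurable_const.mul (measurable_const.sub he'mX))
  have hqsm : StronglyMeasurable[mX] q := hqmX.stronglyMeasurable
  have hqam := (hqsm.mono hm).aestronglyMeasurable (μ := μ)
  have hqbd : ∀ᵐ ω ∂μ, ‖q ω‖ ≤ (Cν + Cμ) / (π * δ) := by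
    filter_upwards [hbd] with ω hb
    obtain ⟨h0, h1⟩ := hb
    have hδ1 : δ ≤ 1 - e' ω := by linarith
    have hpos : 0 < π * (1 - e' ω) := mul_pos hπpos (by linarith)
    simp only [hqdef, Real.norm_eq_abs, abs_div, abs_of_pos hpos]
    exact div_le_div₀ (le_trans (abs_nonneg _) (hdb ω)) (hdb ω) (mul_pos hπpos hδ)
      (mul_le_mul_of_nonneg_left hδ1 (le_of_lt hπpos))
  have hGint : Integrable G μ :=
    MemLp.integrable le_rfl (MemLp.of_bound (hGmeas.aestronglyMeasurable) 1
      (Filter.Eventually.of_forall fun ω => by rcases hG ω with h | h <;> simp [h]))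
  have hqG : Integrable (fun ω => q ω * G ω) μ := Integrable.bdd_mul hGint hqam hqbd
  have he'int : Integrable e' μ := integrable_condExp
  have hqe' : Integrable (fun ω => q ω * e' ω) μ := Integrable.bdd_mul he'int hqam hqbd
  have hpull : μ[(fun ω => q ω * G ω)|mX] =ᵐ[μ] fun ω => q ω * e' ω :=
    condExp_mul_of_stronglyMeasurable_left hqsm hqG hGint
  have hintqG : ∫ ω, q ω * G ω ∂μ = ∫ ω, q ω * e' ω ∂μ := by
    rw [← integral_condExp (f := fun ω => q ω * G ω) hm]
    exact integral_congr_ae hpull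
  have hZ0 : ∫ ω, Z ω ∂μ = 0 := by
    have hZsplit : ∀ ω, Z ω = q ω * G ω - q ω * e' ω := fun ω => by
      simp only [hZdef, hqdef, hc'def]; ring
    calc ∫ ω, Z ω ∂μ = ∫ ω, (q ω * G ω - q ω * e' ω) ∂μ := by simp only [hZsplit]
      _ = (∫ ω, q ω * G ω ∂μ) - ∫ ω, q ω * e' ω ∂μ := integral_sub hqG hqe'
      _ = 0 := by rw [hintqG]; ring
  -- variance rewrites
  have hAveq : variance (fun ω => (G ω - e ω) * (Yt1 ω - Yt ω) / (π * (1 - e ω)) - τ) μ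
      = variance (fun ω => W ω - τ) μ :=
    my_variance_congr (by
      filter_upwards [hee'] with ω h
      rw [h]; simp only [hWdef, hc'def, hΔdef]; ring)
  have hBveq : variance (fun ω =>
        (G ω - e ω) * (Yt1 ω - Yt ω - (ν ω - μf ω)) / (π * (1 - e ω)) - τ) μ
      = variance (fun ω => W ω - Z ω - τ) μ :=
    my_variance_congr (by
      filter_upwards [hee'] with ω h
      rw [h]; simp only [hWdef, hZdef, hc'def, hΔdef, hddef]; ring)
  have hAmem : MemLp (fun ω => W ω - τ) 2 μ := hWmem.sub (memLp_const τ)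
  have hBmem : MemLp (fun ω => W ω - Z ω - τ) 2 μ := (hWmem.sub hZ2).sub (memLp_const τ)
  have hA2 : Integrable (fun ω => (W ω - τ) ^ 2) μ := hAmem.integrable_sq
  have hB2 : Integrable (fun ω => (W ω - Z ω - τ) ^ 2) μ := hBmem.integrable_sq
  have hAmean : ∫ ω, (W ω - τ) ∂μ = 0 := by
    rw [integral_sub hWint (integrable_const τ), hτW, integral_const]
    simp
  have hBmean : ∫ ω, (W ω - Z ω - τ) ∂μ = 0 := by
    have h1 : Integrable (fun ω => W ω - Z ω) μ := hWint.sub hZint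
    rw [integral_sub h1 (integrable_const τ), integral_sub hWint hZint, hτW, hZ0,
      integral_const]
    simp
  have hptw : ∀ ω, (W ω - τ) ^ 2 - (W ω - Z ω - τ) ^ 2
      = 2 * (Z ω * W ω) - Z ω ^ 2 - 2 * τ * Z ω := fun ω => by ring
  have hdiffsq : (∫ ω, (W ω - τ) ^ 2 ∂μ) - ∫ ω, (W ω - Z ω - τ) ^ 2 ∂μ
      = 2 * (∫ ω, Z ω * W ω ∂μ) - ∫ ω, Z ω ^ 2 ∂μ := by
    rw [← integral_sub hA2 hB2]
    simp only [hptw]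
    have hI1 : Integrable (fun ω => 2 * (Z ω * W ω)) μ := hZWint.const_mul 2
    have hI2 : Integrable (fun ω => 2 * (Z ω * W ω) - Z ω ^ 2) μ := hI1.sub hZsq
    have hI3 : Integrable (fun ω => 2 * τ * Z ω) μ := hZint.const_mul (2 * τ)
    rw [integral_sub hI2 hI3, integral_sub hI1 hZsq, integral_const_mul,
      integral_const_mul, hZ0]
    ring
  -- RHS integrand rewrites
  have hπ0 : π ≠ 0 := ne_of_gt hπpos
  have hR1 : ∫ ω, ((G ω - e ω) / (1 - e ω)) ^ 2 * (Yt1 ω - Yt ω) * (ν ω - μf ω) ∂μ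
      = π ^ 2 * ∫ ω, Z ω * W ω ∂μ := by
    rw [← integral_const_mul]
    refine integral_congr_ae ?_
    filter_upwards [hee', hbd] with ω h hb
    obtain ⟨h0, h1⟩ := hb
    have h1e : (1 : ℝ) - e' ω ≠ 0 := by intro hc; linarith
    simp only [hZdef, hWdef, hc'def, hΔdef, hddef, h]
    field_simp
  have hR2 : ∫ ω, ((G ω - e ω) / (1 - e ω)) ^ 2 * (ν ω - μf ω) ^ 2 ∂μ
      = π ^ 2 * ∫ ω, Z ω ^ 2 ∂μ := by
    rw [← integral_const_mul]
    refine integral_congr_ae ?_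
    filter_upwards [hee', hbd] with ω h hb
    obtain ⟨h0, h1⟩ := hb
    have h1e : (1 : ℝ) - e' ω ≠ 0 := by intro hc; linarith
    simp only [hZdef, hc'def, hddef, h]
    field_simp
  -- put it together
  rw [hAveq, hBveq, variance_eq_sub hAmem, variance_eq_sub hBmem, hR1, hR2]
  simp only [Pi.pow_apply]
  rw [hAmean, hBmean]
  have hfin : ∀ a b : ℝ, 2 / π ^ 2 * (π ^ 2 * a) - 1 / π ^ 2 * (π ^ 2 * b)
      = 2 * a - b := by
    intro a b; field_simp
  rw [hfin]
  norm_num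
  linarith [hdiffsq]
end

section
/- There exists a joint distribution of (X, G, Y_t, Y_{t+1}) satisfying overlap (e(X) ≤ 1−δ) and choices of correctly specified ν(X) = E[Y_{t+1}|X,G=0], μ(X) = E[Y_t|X,G=0], for which Var(φ^wt) − Var(φ^dr) < 0; i.e., the double-robust DID estimator is not always asymptotically at least as efficient as the weighting estimator even when all models are correct. -/
/-!
Take a degenerate covariate `X ≡ 0` and two equally likely units: a control unit whose outcome
rises by `1` and a treated unit whose outcome falls by `1`. Then `e ≡ 1/2`, `ν ≡ 1`, `μ ≡ 0`,
and the weighting kernel `(G - e) ΔY / (π (1 - e))` equals `-2` on both units, so `φ^wt` has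
variance `0`; subtracting the correctly specified trend `ν - μ = 1` moves the kernel to `0` and
`-4`, so `φ^dr` has variance `4`.
-/

open MeasureTheory ProbabilityTheory
open scoped ENNReal

theorem condExp_comap_apply_of_ae_eq_const {Ω β E : Type*} [MeasurableSpace Ω]
    [mβ : MeasurableSpace β] [NormedAddCommGroup E] [NormedSpace ℝ E] [CompleteSpace E]
    {μ : Measure Ω} [IsProbabilityMeasure μ] {X : Ω → β} (hX : Measurable X) {x : β}
    (hXae : ∀ᵐ ω ∂μ, X ω = x) {ω : Ω} (hω : X ω = x) (f : Ω → E) :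
    μ[f | mβ.comap X] ω = ∫ ω', f ω' ∂μ := by
  have hconst : ∀ᵐ ω' ∂μ, μ[f | mβ.comap X] ω = μ[f | mβ.comap X] ω' :=
    hXae.mono fun ω' h ↦ stronglyMeasurable_condExp.factorsThrough (hω.trans h.symm)
  calc μ[f | mβ.comap X] ω = ∫ _, μ[f | mβ.comap X] ω ∂μ := by simp
    _ = ∫ ω', μ[f | mβ.comap X] ω' ∂μ := integral_congr_ae hconst
    _ = ∫ ω', f ω' ∂μ := integral_condExp hX.comap_le

section TwoPoint

variable {α : Type*} [MeasurableSpace α] {a b : α}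

noncomputable def twoPoint (a b : α) : Measure α := (2⁻¹ : ℝ≥0∞) • (.dirac a + .dirac b)

instance : IsProbabilityMeasure (twoPoint a b) :=
  ⟨by simp [twoPoint, ENNReal.inv_two_add_inv_two]⟩

theorem twoPoint_comm (a b : α) : twoPoint a b = twoPoint b a := by
  rw [twoPoint, twoPoint, add_comm]

variable [MeasurableSingletonClass α]

theorem ae_twoPoint_iff {p : α → Prop} : (∀ᵐ x ∂twoPoint a b, p x) ↔ p a ∧ p b := by
  simp [twoPoint, ae_add_measure_iff, ae_dirac_eq]

theorem twoPoint_apply_of_mem_of_notMem {s : Set α} (ha : a ∈ s) (hb : b ∉ s) :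
    twoPoint a b s = 2⁻¹ := by
  simp [twoPoint, Measure.dirac_apply, ha, hb]

theorem cond_twoPoint_of_mem_of_notMem {s : Set α} (ha : a ∈ s) (hb : b ∉ s) :
    (twoPoint a b)[|s] = .dirac a := by
  classical
  rw [ProbabilityTheory.cond, twoPoint_apply_of_mem_of_notMem ha hb, twoPoint,
    Measure.restrict_smul, Measure.restrict_add, restrict_dirac, restrict_dirac, if_pos ha,
    if_neg hb, add_zero, smul_smul, inv_inv, ENNReal.mul_inv_cancel (by norm_num) (by norm_num),
    one_smul]

theorem memLp_twoPoint (f : α → ℝ) (p : ℝ≥0∞) : MemLp f p (twoPoint a b) := by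
  have hf : AEStronglyMeasurable f (twoPoint a b) :=
    (aestronglyMeasurable_dirac.add_measure aestronglyMeasurable_dirac).smul_measure _
  exact .of_bound hf (max ‖f a‖ ‖f b‖) (ae_twoPoint_iff.2 ⟨le_max_left _ _, le_max_right _ _⟩)

theorem integral_twoPoint (f : α → ℝ) : ∫ x, f x ∂twoPoint a b = (f a + f b) / 2 := by
  rw [twoPoint, integral_smul_measure, integral_add_measure, integral_dirac, integral_dirac]
  · simp
    ring
  all_goals exact integrable_dirac (by simp)

theorem variance_twoPoint (f : α → ℝ) : variance f (twoPoint a b) = ((f a - f b) / 2) ^ 2 := by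
  rw [variance_eq_sub (memLp_twoPoint f 2), integral_twoPoint, integral_twoPoint]
  simp only [Pi.pow_apply]
  ring

end TwoPoint

/-- There exists a joint distribution of `(X, G, Y_t, Y_{t+1})`
(a probability measure on `ℝ⁴`, with coordinates `X, G, Y_t, Y_{t+1}`) satisfying
overlap (`e(X) ≤ 1−δ` with `e(X) = E[G|σ(X)]`), with correctly specified outcome
models `ν(X) = E[Y_{t+1}|X,G=0]`, `μ(X) = E[Y_t|X,G=0]` and centering
`τ = E[φ-kernel]` so both influence functions have mean zero, for which
`Var(φ^wt) − Var(φ^dr) < 0`: the double-robust DID estimator is not always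
asymptotically at least as efficient as the weighting estimator even when all
models are correct. -/
theorem stmt_12 :
    ∃ (μ : Measure (ℝ × ℝ × ℝ × ℝ)) (_ : IsProbabilityMeasure μ) (δ π τ : ℝ),
      -- coordinates: X = z.1, G = z.2.1, Y_t = z.2.2.1, Y_{t+1} = z.2.2.2
      (∀ᵐ z ∂μ, z.2.1 = 0 ∨ z.2.1 = 1) ∧
      μ {z | z.2.1 = 0} ≠ 0 ∧
      π = (μ {z | z.2.1 = 1}).toReal ∧ 0 < π ∧
      MemLp (fun z : ℝ × ℝ × ℝ × ℝ => z.2.2.1) 2 μ ∧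
      MemLp (fun z : ℝ × ℝ × ℝ × ℝ => z.2.2.2) 2 μ ∧
      0 < δ ∧
      -- e = true propensity score, ν/μf = true outcome regressions on {G = 0}
      (let mX : MeasurableSpace (ℝ × ℝ × ℝ × ℝ) :=
          MeasurableSpace.comap (fun z : ℝ × ℝ × ℝ × ℝ => z.1) inferInstance
        let e := MeasureTheory.condExp mX μ (fun z => z.2.1)
        let ν := MeasureTheory.condExp mX (μ[|{z | z.2.1 = 0}]) (fun z => z.2.2.2)
        let μf := MeasureTheory.condExp mX (μ[|{z | z.2.1 = 0}]) (fun z => z.2.2.1)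
        (∀ᵐ z ∂μ, 0 ≤ e z) ∧ (∀ᵐ z ∂μ, e z ≤ 1 - δ) ∧
        τ = ∫ z, (z.2.1 - e z) * (z.2.2.2 - z.2.2.1) / (π * (1 - e z)) ∂μ ∧
        variance (fun z => (z.2.1 - e z) * (z.2.2.2 - z.2.2.1) / (π * (1 - e z)) - τ) μ
          < variance (fun z =>
              (z.2.1 - e z) * (z.2.2.2 - z.2.2.1 - (ν z - μf z)) / (π * (1 - e z)) - τ) μ) := by
  set P := twoPoint ((0, 0, 0, 1) : ℝ × ℝ × ℝ × ℝ) (0, 1, 0, -1)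
  have hX : Measurable fun z : ℝ × ℝ × ℝ × ℝ => z.1 := measurable_fst
  have hXP : ∀ᵐ z ∂P, z.1 = 0 := ae_twoPoint_iff.2 ⟨rfl, rfl⟩
  have hXcontrol : ∀ᵐ z ∂Measure.dirac ((0, 0, 0, 1) : ℝ × ℝ × ℝ × ℝ), z.1 = 0 := by
    simp [ae_dirac_eq]
  have hcond : P[|{z | z.2.1 = 0}] = .dirac (0, 0, 0, 1) :=
    cond_twoPoint_of_mem_of_notMem (by simp) (by simp)
  have he (z : ℝ × ℝ × ℝ × ℝ) (hz : z.1 = 0) :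
      P[fun z => z.2.1 | .comap (fun z : ℝ × ℝ × ℝ × ℝ => z.1) inferInstance] z = 1 / 2 := by
    rw [condExp_comap_apply_of_ae_eq_const hX hXP hz, integral_twoPoint]
    norm_num
  have hν (z : ℝ × ℝ × ℝ × ℝ) (hz : z.1 = 0) : P[|{z | z.2.1 = 0}][fun z => z.2.2.2 |
      .comap (fun z : ℝ × ℝ × ℝ × ℝ => z.1) inferInstance] z = 1 := by
    rw [hcond, condExp_comap_apply_of_ae_eq_const hX hXcontrol hz, integral_dirac]
  have hμ (z : ℝ × ℝ × ℝ × ℝ) (hz : z.1 = 0) : P[|{z | z.2.1 = 0}][fun z => z.2.2.1 |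
      .comap (fun z : ℝ × ℝ × ℝ × ℝ => z.1) inferInstance] z = 0 := by
    rw [hcond, condExp_comap_apply_of_ae_eq_const hX hXcontrol hz, integral_dirac]
  refine ⟨P, inferInstance, 1 / 2, 1 / 2, -2, ae_twoPoint_iff.2 (by norm_num), ?_, ?_,
    by norm_num, memLp_twoPoint _ _, memLp_twoPoint _ _, by norm_num,
    ae_twoPoint_iff.2 (by norm_num [he]), ae_twoPoint_iff.2 (by norm_num [he]), ?_, ?_⟩
  · simp [P, twoPoint_apply_of_mem_of_notMem]
  · rw [show P = twoPoint _ _ from twoPoint_comm _ _,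
      twoPoint_apply_of_mem_of_notMem (by simp) (by simp)]
    norm_num
  · rw [integral_twoPoint]
    norm_num [he]
  · rw [variance_twoPoint, variance_twoPoint]
    norm_num [he, hν, hμ]
end
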